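/- Injectivity of a lattice homomorphism is equivalent to surjectivity on spectra. Let T and T' be bounded distributive lattices and φ : T → T' a bounded lattice homomorphism. Then φ is injective if and only if the induced map Hom(T', Bool) → Hom(T, Bool), ψ ↦ ψ ∘ φ, is surjective. -/
import Mathlib

open Order Classical

/-- The characteristic hom of the complement of a prime ideal. -/
noncomputable def primeHom {α : Type*} [DistribLattice α] [BoundedOrder α]
    (J : Order.Ideal α) (hJ : Order.Ideal.IsPrime J) : BoundedLatticeHom α Bool where
  toFun x := decide (x ∉ J)
  map_sup' x y := by
    have h : x ⊔ y ∈ J ↔ x ∈ J ∧ y ∈ J :=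
      ⟨fun h => ⟨J.lower le_sup_left h, J.lower le_sup_right h⟩,
       fun h => Order.Ideal.sup_mem h.1 h.2⟩
    by_cases hx : x ∈ J <;> by_cases hy : y ∈ J <;> simp [hx, hy, h]
  map_inf' x y := by
    have h : x ⊓ y ∈ J ↔ x ∈ J ∨ y ∈ J :=
      ⟨hJ.mem_or_mem, fun h => h.elim (J.lower inf_le_left) (J.lower inf_le_right)⟩
    by_cases hx : x ∈ J <;> by_cases hy : y ∈ J <;> simp [hx, hy, h]
  map_top' := by simp [hJ.toIsProper.top_notMem]
  map_bot' := by simp [J.bot_mem]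

theorem primeHom_apply {α : Type*} [DistribLattice α] [BoundedOrder α]
    (J : Order.Ideal α) (hJ : Order.Ideal.IsPrime J) (x : α) :
    primeHom J hJ x = decide (x ∉ J) := rfl

theorem stmt_12 {T T' : Type*} [DistribLattice T] [BoundedOrder T]
    [DistribLattice T'] [BoundedOrder T'] (φ : BoundedLatticeHom T T') :
    Function.Injective φ ↔
    Function.Surjective (fun ψ : BoundedLatticeHom T' Bool => ψ.comp φ) := by
  constructor
  · intro hinj f
    have hord : ∀ {a b : T}, φ a ≤ φ b → a ≤ b := by
      intro a b h
      have h1 : φ (a ⊓ b) = φ a := by rw [map_inf]; exact inf_eq_left.mpr h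
      exact inf_eq_left.mp (hinj h1)
    -- the ideal generated by the image of f⁻¹(⊥)
    set I : Order.Ideal T' :=
      { carrier := {x | ∃ b, f b = ⊥ ∧ x ≤ φ b}
        lower' := fun x y hyx ⟨b, hb, hxb⟩ => ⟨b, hb, hyx.trans hxb⟩
        nonempty' := ⟨⊥, ⊥, map_bot f, bot_le⟩
        directed' := by
          rintro x ⟨b, hb, hxb⟩ y ⟨c, hc, hyc⟩
          exact ⟨φ (b ⊔ c), ⟨b ⊔ c, by simp [hb, hc], le_rfl⟩,
            hxb.trans (by rw [map_sup]; exact le_sup_left),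
            hyc.trans (by rw [map_sup]; exact le_sup_right)⟩ } with hI
    -- the filter generated by the image of f⁻¹(⊤)
    have hF : Order.IsPFilter {x : T' | ∃ a, f a = ⊤ ∧ φ a ≤ x} := by
      refine Order.IsPFilter.of_def ⟨⊤, ⊤, map_top f, le_top⟩ ?_ ?_
      · rintro x ⟨a, ha, hax⟩ y ⟨c, hc, hcy⟩
        refine ⟨φ (a ⊓ c), ⟨a ⊓ c, by simp [ha, hc], le_rfl⟩, ?_, ?_⟩
        · exact le_trans (by rw [map_inf]; exact inf_le_left) hax
        · exact le_trans (by rw [map_inf]; exact inf_le_right) hcy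
      · rintro x y hxy ⟨a, ha, hax⟩
        exact ⟨a, ha, hax.trans hxy⟩
    set F : Order.PFilter T' := hF.toPFilter with hFdef
    have hmemF : ∀ x : T', x ∈ F ↔ ∃ a, f a = ⊤ ∧ φ a ≤ x := fun x => Iff.rfl
    have hmemI : ∀ x : T', x ∈ I ↔ ∃ b, f b = ⊥ ∧ x ≤ φ b := fun x => Iff.rfl
    have hdisj : Disjoint (F : Set T') (I : Set T') := by
      rw [Set.disjoint_left]
      rintro x ⟨a, ha, hax⟩ ⟨b, hb, hxb⟩
      have : a ≤ b := hord (hax.trans hxb)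
      have : f a ≤ f b := OrderHomClass.mono f this
      rw [ha, hb] at this
      exact absurd this (by decide)
    obtain ⟨J, hJp, hIJ, hJF⟩ := DistribLattice.prime_ideal_of_disjoint_filter_ideal hdisj
    refine ⟨primeHom J hJp, ?_⟩
    ext a
    simp only [BoundedLatticeHom.coe_comp, Function.comp_apply, primeHom_apply]
    cases hfa : f a with
    | false =>
      have : φ a ∈ J := hIJ ((hmemI (φ a)).mpr ⟨a, by simp [hfa], le_rfl⟩)
      simp [this]
    | true =>
      have hmem : φ a ∈ F := (hmemF (φ a)).mpr ⟨a, by simp [hfa], le_rfl⟩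
      have : φ a ∉ J := Set.disjoint_left.mp hJF hmem
      simp [this]
  · intro hsurj
    have key : ∀ c d : T, φ c = φ d → c ≤ d := by
      intro c d h
      by_contra hnot
      have hdisj : Disjoint ((Order.PFilter.principal c : Order.PFilter T) : Set T)
          ((Order.Ideal.principal d : Order.Ideal T) : Set T) := by
        rw [Set.disjoint_left]
        intro x hx hx'
        exact hnot (le_trans (Order.PFilter.mem_principal.mp hx)
          (Order.Ideal.mem_principal.mp hx'))
      obtain ⟨J, hJp, hIJ, hJF⟩ := DistribLattice.prime_ideal_of_disjoint_filter_ideal hdisj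
      have hdJ : d ∈ J := hIJ (Order.Ideal.mem_principal.mpr le_rfl)
      have hcJ : c ∉ J := Set.disjoint_left.mp hJF (Order.PFilter.mem_principal.mpr le_rfl)
      obtain ⟨ψ, hψ⟩ := hsurj (primeHom J hJp)
      have hc := DFunLike.congr_fun hψ c
      have hd := DFunLike.congr_fun hψ d
      simp only [BoundedLatticeHom.coe_comp, Function.comp_apply, primeHom_apply] at hc hd
      rw [h] at hc
      rw [hc] at hd
      simp [hcJ, hdJ] at hd
    exact fun a b hab => le_antisymm (key a b hab) (key b a hab.symm)
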